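/- The following are equivalent: (i) D and D⁺ are both bipartite; (ii) (B−I)² = 0 (there is no directed path of length greater than one in D); (iii) B_{i,j} = |(B⁻¹)_{i,j}| for all i < j (i.e., D = D⁺) and D is bipartite. -/

import Mathlib

/-!
Write `B = 1 + N`. A 2-colouring of `D` gives a diagonal sign matrix `S` with `S N S = -N`, hence
`B⁻¹ = S (1 - N)⁻¹ S`, while `(1 - N)⁻¹ = ∑ₘ Nᵐ` counts directed paths. So when `D` is bipartite,
`|(B⁻¹)ᵢⱼ|` is the number of paths from `i` to `j`, which is at least `Nᵢⱼ + (N²)ᵢⱼ` for `i ≠ j`.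
This gives (iii) ⇒ (ii), and also (i) ⇒ (ii): a path `i → v → j` would make `{i, v, j}` a triangle
in `D⁺`. Conversely, if `N² = 0` then `B⁻¹ = 1 - N`, so `D⁺ = D`, and colouring each vertex by
whether it has an out-edge makes `D` bipartite.
-/

open Matrix

/-- A square integer matrix `M` is *signable* if there is a signing vector `s`
(valued in `{+1, -1}`) with `s i * M i j * s j = |M i j|` for all `i, j`. -/
def IsSignable {k : ℕ} (M : Matrix (Fin k) (Fin k) ℤ) : Prop :=
  ∃ s : Fin k → ℤ, (∀ i, s i = 1 ∨ s i = -1) ∧ ∀ i j, s i * M i j * s j = |M i j|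

/-- `{i, j}` is an edge of the maximal-path subgraph `Γ_D` of the digraph `D` with
adjacency matrix `B - 1`: there is an edge from `i` to `j` and no directed path
of length `≥ 2` from `i` to `j`. -/
def GammaEdge {k : ℕ} (B : Matrix (Fin k) (Fin k) ℤ) (i j : Fin k) : Prop :=
  i < j ∧ 1 ≤ B i j ∧ ∀ m : ℕ, 2 ≤ m → ((B - 1) ^ m) i j = 0

/-- The maximal-path subgraph `Γ_D` is bipartite. -/
def GammaBipartite {k : ℕ} (B : Matrix (Fin k) (Fin k) ℤ) : Prop :=
  ∃ c : Fin k → Bool, ∀ i j : Fin k, GammaEdge B i j → c i ≠ c j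

open Classical in
/-- The pairing `⟨i,j⟩`: it is `1` on the diagonal, `(-1)^ℓ(i,j)` where `ℓ(i,j)` is the
length of a longest directed path from `i` to `j` when such a path exists, and `0`
otherwise. -/
noncomputable def pairing {k : ℕ} (B : Matrix (Fin k) (Fin k) ℤ) (i j : Fin k) : ℤ :=
  if i = j then 1
  else if ∃ m : ℕ, 1 ≤ m ∧ ((B - 1) ^ m) i j ≠ 0 then
    (-1 : ℤ) ^ sSup {m : ℕ | 1 ≤ m ∧ ((B - 1) ^ m) i j ≠ 0}
  else 0

/-- `B⁽ᵛ⁾`: the matrix obtained from `B` by replacing every off-diagonal entry in row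
`v` and in column `v` by `0` (deleting the vertex `v` from the digraph). -/
def vertexDelete {k : ℕ} (B : Matrix (Fin k) (Fin k) ℤ) (v : Fin k) :
    Matrix (Fin k) (Fin k) ℤ :=
  Matrix.of fun i j => if i ≠ j ∧ (i = v ∨ j = v) then 0 else B i j

/-- `(i,j)` is a zero pair: no directed path from `i` to `j`. -/
def ZeroPair {k : ℕ} (B : Matrix (Fin k) (Fin k) ℤ) (i j : Fin k) : Prop :=
  ∀ m : ℕ, 1 ≤ m → ((B - 1) ^ m) i j = 0

/-- `(i,j)` is a unit pair: all directed paths from `i` to `j` have length one. -/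
def UnitPair {k : ℕ} (B : Matrix (Fin k) (Fin k) ℤ) (i j : Fin k) : Prop :=
  1 ≤ B i j ∧ ∀ m : ℕ, 2 ≤ m → ((B - 1) ^ m) i j = 0

/-- `(i,j)` is a composite pair: every directed path from `i` to `j` passes through
some fixed intermediate vertex `v`. -/
def CompositePair {k : ℕ} (B : Matrix (Fin k) (Fin k) ℤ) (i j : Fin k) : Prop :=
  ∃ v : Fin k, i < v ∧ v < j ∧ ∀ m : ℕ, 1 ≤ m → ((vertexDelete B v - 1) ^ m) i j = 0

/-- `(i,j)` is a prime pair: `i < j` and `(i,j)` is neither a zero pair, a unit pair,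
nor a composite pair. -/
def PrimePair {k : ℕ} (B : Matrix (Fin k) (Fin k) ℤ) (i j : Fin k) : Prop :=
  i < j ∧ ¬ZeroPair B i j ∧ ¬UnitPair B i j ∧ ¬CompositePair B i j

namespace Matrix

variable {ι R : Type*}

theorem pow_card_eq_zero_of_strictly_upper_triangular [Fintype ι] [LinearOrder ι] [CommRing R]
    {N : Matrix ι ι R} (hN : ∀ i j, N i j ≠ 0 → i < j) : N ^ Fintype.card ι = 0 := by
  have hupper : N.IsUpperTriangular := fun i j hji => by
    by_contra h
    exact lt_asymm hji (hN i j h)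
  have hdiag : ∀ i, N i i = 0 := fun i => by
    by_contra h
    exact lt_irrefl i (hN i i h)
  simpa [charpoly_of_isUpperTriangular N hupper, hdiag] using aeval_self_charpoly N

section Inverse

variable [Fintype ι] [DecidableEq ι] [CommRing R] {N : Matrix ι ι R}

theorem inv_one_sub_eq_sum_range_pow {k : ℕ} (hk : N ^ k = 0) :
    (1 - N)⁻¹ = ∑ l ∈ Finset.range k, N ^ l :=
  inv_eq_right_inv (by rw [mul_neg_geom_sum, hk, sub_zero])

theorem inv_one_add_eq_one_sub_of_sq_eq_zero (hN : N ^ 2 = 0) : (1 + N)⁻¹ = 1 - N := by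
  have hneg : (-N) ^ 2 = 0 := by rw [neg_sq, hN]
  rw [← sub_neg_eq_add, inv_one_sub_eq_sum_range_pow hneg]
  simp [Finset.sum_range_succ, sub_eq_add_neg]

theorem inv_one_add_apply_of_sq_eq_zero (hN : N ^ 2 = 0) {i j : ι} (hij : i ≠ j) :
    (1 + N)⁻¹ i j = -N i j := by
  rw [inv_one_add_eq_one_sub_of_sq_eq_zero hN, sub_apply, one_apply_ne hij, zero_sub]

theorem inv_one_add_apply_eq_mul_inv_one_sub_apply {s : ι → R} (hs : ∀ i, s i * s i = 1)
    (hsN : ∀ i j, s i * N i j * s j = -N i j) (i j : ι) :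
    (1 + N)⁻¹ i j = s i * s j * (1 - N)⁻¹ i j := by
  set S := diagonal s
  have hSS : S * S = 1 := by rw [diagonal_mul_diagonal, ← diagonal_one]; exact congrArg _ (funext hs)
  have hconj : S * (1 - N) * S = 1 + N := by
    ext a b
    by_cases hab : a = b
    · subst hab
      simp only [S, diagonal_mul, mul_diagonal, sub_apply, add_apply, one_apply_eq]
      linear_combination hs a - hsN a a
    · simp only [S, diagonal_mul, mul_diagonal, sub_apply, add_apply, one_apply_ne hab]
      linear_combination -hsN a b
  have hinv : (1 + N)⁻¹ = S * (1 - N)⁻¹ * S := by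
    rw [← hconj, mul_inv_rev, mul_inv_rev, inv_eq_left_inv hSS, mul_assoc]
  rw [hinv, mul_diagonal, diagonal_mul]
  ring

end Inverse

section Nonneg

variable [CommRing R] [LinearOrder R] [IsStrictOrderedRing R] {N : Matrix ι ι R}

theorem exists_signing_of_coloring {c : ι → Bool} (hc : ∀ i j, N i j ≠ 0 → c i ≠ c j) :
    ∃ s : ι → R, (∀ i, |s i| = 1) ∧ ∀ i j, s i * N i j * s j = -N i j := by
  refine ⟨fun i => if c i then 1 else -1, fun i => by by_cases h : c i <;> simp [h], fun i j => ?_⟩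
  by_cases h : N i j = 0
  · simp [h]
  · have := hc i j h
    cases hi : c i <;> cases hj : c j <;> simp_all

variable [Fintype ι] [DecidableEq ι]

theorem sq_apply_ne_zero_iff (hN : ∀ i j, 0 ≤ N i j) {i j : ι} :
    (N ^ 2) i j ≠ 0 ↔ ∃ v, N i v ≠ 0 ∧ N v j ≠ 0 := by
  rw [sq, mul_apply, Ne, Finset.sum_eq_zero_iff_of_nonneg fun v _ => mul_nonneg (hN i v) (hN v j)]
  simp

theorem exists_coloring_of_sq_eq_zero (hN : ∀ i j, 0 ≤ N i j) (hsq : N ^ 2 = 0) :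
    ∃ c : ι → Bool, ∀ i j, N i j ≠ 0 → c i ≠ c j := by
  classical
  refine ⟨fun i => decide (∃ k, N i k ≠ 0), fun i j hij => ?_⟩
  have hj : ¬∃ k, N j k ≠ 0 := fun ⟨k, hjk⟩ =>
    (sq_apply_ne_zero_iff hN).2 ⟨j, hij, hjk⟩ (by rw [hsq, zero_apply])
  simpa [hj] using ⟨j, hij⟩

theorem abs_inv_one_add_apply_of_sq_eq_zero (hN : ∀ i j, 0 ≤ N i j) (hsq : N ^ 2 = 0)
    {i j : ι} (hij : i ≠ j) : |(1 + N)⁻¹ i j| = N i j := by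
  rw [inv_one_add_apply_of_sq_eq_zero hsq hij, abs_neg, abs_of_nonneg (hN i j)]

theorem sum_range_pow_apply_le_inv_one_sub_apply (hN : ∀ i j, 0 ≤ N i j) (hnil : IsNilpotent N)
    (m : ℕ) (i j : ι) : ∑ l ∈ Finset.range m, (N ^ l) i j ≤ (1 - N)⁻¹ i j := by
  obtain ⟨k, hk⟩ := hnil
  rw [inv_one_sub_eq_sum_range_pow (pow_eq_zero_of_le (le_max_left k m) hk), sum_apply]
  exact Finset.sum_le_sum_of_subset_of_nonneg (Finset.range_mono (le_max_right k m))
    fun l _ _ => pow_apply_nonneg hN l i j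

theorem abs_inv_one_add_apply (hN : ∀ i j, 0 ≤ N i j) (hnil : IsNilpotent N) {c : ι → Bool}
    (hc : ∀ i j, N i j ≠ 0 → c i ≠ c j) (i j : ι) : |(1 + N)⁻¹ i j| = (1 - N)⁻¹ i j := by
  obtain ⟨s, hs, hsN⟩ := exists_signing_of_coloring hc
  have hss : ∀ i, s i * s i = 1 := fun i => by rw [← abs_mul_abs_self, hs, one_mul]
  have hpos : 0 ≤ (1 - N)⁻¹ i j := by
    simpa using sum_range_pow_apply_le_inv_one_sub_apply hN hnil 0 i j
  rw [inv_one_add_apply_eq_mul_inv_one_sub_apply hss hsN, abs_mul, abs_mul, hs, hs, one_mul,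
    one_mul, abs_of_nonneg hpos]

theorem apply_add_sq_apply_le_abs_inv_one_add_apply (hN : ∀ i j, 0 ≤ N i j)
    (hnil : IsNilpotent N) {c : ι → Bool} (hc : ∀ i j, N i j ≠ 0 → c i ≠ c j) {i j : ι}
    (hij : i ≠ j) : N i j + (N ^ 2) i j ≤ |(1 + N)⁻¹ i j| := by
  rw [abs_inv_one_add_apply hN hnil hc]
  simpa [Finset.sum_range_succ, one_apply_ne hij] using
    sum_range_pow_apply_le_inv_one_sub_apply hN hnil 3 i j

theorem inv_one_add_apply_ne_zero (hN : ∀ i j, 0 ≤ N i j) (hnil : IsNilpotent N)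
    {c : ι → Bool} (hc : ∀ i j, N i j ≠ 0 → c i ≠ c j) {i j : ι} (hij : i ≠ j)
    (h : N i j ≠ 0 ∨ (N ^ 2) i j ≠ 0) : (1 + N)⁻¹ i j ≠ 0 := by
  have hpos : 0 < N i j + (N ^ 2) i j := by
    rcases h with h | h
    · exact add_pos_of_pos_of_nonneg ((hN i j).lt_of_ne' h) (pow_apply_nonneg hN 2 i j)
    · exact add_pos_of_nonneg_of_pos (hN i j) ((pow_apply_nonneg hN 2 i j).lt_of_ne' h)
  exact abs_pos.1 (hpos.trans_le (apply_add_sq_apply_le_abs_inv_one_add_apply hN hnil hc hij))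

end Nonneg

section StrictlyUpperTriangular

variable [Fintype ι] [LinearOrder ι] [CommRing R] [LinearOrder R] [IsStrictOrderedRing R]
  {N : Matrix ι ι R}

theorem lt_of_sq_apply_ne_zero (hN : ∀ i j, 0 ≤ N i j) (hNu : ∀ i j, N i j ≠ 0 → i < j)
    {i j : ι} (h : (N ^ 2) i j ≠ 0) : i < j := by
  obtain ⟨v, hiv, hvj⟩ := (sq_apply_ne_zero_iff hN).1 h
  exact (hNu i v hiv).trans (hNu v j hvj)

theorem sq_eq_zero_of_coloring_of_coloring_inv_one_add (hN : ∀ i j, 0 ≤ N i j)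
    (hNu : ∀ i j, N i j ≠ 0 → i < j) {c c' : ι → Bool} (hc : ∀ i j, N i j ≠ 0 → c i ≠ c j)
    (hc' : ∀ i j, i < j → (1 + N)⁻¹ i j ≠ 0 → c' i ≠ c' j) : N ^ 2 = 0 := by
  have hnil : IsNilpotent N := ⟨_, pow_card_eq_zero_of_strictly_upper_triangular hNu⟩
  ext i j
  rw [zero_apply]
  by_contra h
  obtain ⟨v, hiv, hvj⟩ := (sq_apply_ne_zero_iff hN).1 h
  have hiv' := hNu i v hiv
  have hvj' := hNu v j hvj
  have hij := hiv'.trans hvj'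
  have h₁ := hc' i v hiv' (inv_one_add_apply_ne_zero hN hnil hc hiv'.ne (.inl hiv))
  have h₂ := hc' v j hvj' (inv_one_add_apply_ne_zero hN hnil hc hvj'.ne (.inl hvj))
  have h₃ := hc' i j hij (inv_one_add_apply_ne_zero hN hnil hc hij.ne (.inr h))
  revert h₁ h₂ h₃
  cases c' i <;> cases c' v <;> cases c' j <;> decide

theorem sq_eq_zero_of_apply_eq_abs_inv_one_add_apply (hN : ∀ i j, 0 ≤ N i j)
    (hNu : ∀ i j, N i j ≠ 0 → i < j) {c : ι → Bool} (hc : ∀ i j, N i j ≠ 0 → c i ≠ c j)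
    (heq : ∀ i j, i < j → N i j = |(1 + N)⁻¹ i j|) : N ^ 2 = 0 := by
  have hnil : IsNilpotent N := ⟨_, pow_card_eq_zero_of_strictly_upper_triangular hNu⟩
  ext i j
  rw [zero_apply]
  by_contra h
  have hij := lt_of_sq_apply_ne_zero hN hNu h
  have hle := apply_add_sq_apply_le_abs_inv_one_add_apply hN hnil hc hij.ne
  rw [← heq i j hij] at hle
  exact h (le_antisymm (by linarith) (pow_apply_nonneg hN 2 i j))

end StrictlyUpperTriangular

section Unitriangular

variable [LinearOrder ι] {B : Matrix ι ι ℤ}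

theorem sub_one_apply_of_lt {i j : ι} (hij : i < j) : (B - 1) i j = B i j := by
  rw [sub_apply, one_apply_ne hij.ne, sub_zero]

theorem sub_one_apply_eq_zero_of_not_lt (h1 : ∀ i, B i i = 1)
    (h2 : ∀ i j, j < i → B i j = 0) {i j : ι} (hij : ¬i < j) : (B - 1) i j = 0 := by
  rcases (not_lt.1 hij).eq_or_lt with rfl | hji
  · rw [sub_apply, h1, one_apply_eq, sub_self]
  · rw [sub_apply, h2 i j hji, one_apply_ne hji.ne', sub_self]

theorem sub_one_apply_nonneg (h1 : ∀ i, B i i = 1) (h2 : ∀ i j, j < i → B i j = 0)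
    (h3 : ∀ i j, i < j → 0 ≤ B i j) (i j : ι) : 0 ≤ (B - 1) i j := by
  by_cases hij : i < j
  · exact (sub_one_apply_of_lt hij).symm ▸ h3 i j hij
  · rw [sub_one_apply_eq_zero_of_not_lt h1 h2 hij]

theorem sub_one_apply_ne_zero_iff (h1 : ∀ i, B i i = 1) (h2 : ∀ i j, j < i → B i j = 0)
    (h3 : ∀ i j, i < j → 0 ≤ B i j) (i j : ι) : (B - 1) i j ≠ 0 ↔ i < j ∧ 1 ≤ B i j := by
  by_cases hij : i < j
  · rw [sub_one_apply_of_lt hij]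
    have := h3 i j hij
    simp only [hij, true_and]
    omega
  · simp [sub_one_apply_eq_zero_of_not_lt h1 h2 hij, hij]

end Unitriangular

end Matrix

theorem stmt9_general {n : ℕ} (B : Matrix (Fin n) (Fin n) ℤ)
    (h1 : ∀ i, B i i = 1) (h2 : ∀ i j : Fin n, j < i → B i j = 0)
    (h3 : ∀ i j : Fin n, i < j → 0 ≤ B i j) :
    (((∃ c : Fin n → Bool, ∀ i j : Fin n, i < j → 1 ≤ B i j → c i ≠ c j) ∧
        (∃ c : Fin n → Bool, ∀ i j : Fin n, i < j → B⁻¹ i j ≠ 0 → c i ≠ c j)) ↔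
      (B - 1) ^ 2 = 0) ∧
    ((B - 1) ^ 2 = 0 ↔
      ((∀ i j : Fin n, i < j → B i j = |B⁻¹ i j|) ∧
        ∃ c : Fin n → Bool, ∀ i j : Fin n, i < j → 1 ≤ B i j → c i ≠ c j)) := by
  have hN0 := sub_one_apply_nonneg h1 h2 h3
  have hsupp := sub_one_apply_ne_zero_iff h1 h2 h3
  have hNu : ∀ i j, (B - 1) i j ≠ 0 → i < j := fun i j h => ((hsupp i j).1 h).1
  have hcol : (∃ c : Fin n → Bool, ∀ i j : Fin n, i < j → 1 ≤ B i j → c i ≠ c j) ↔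
      ∃ c : Fin n → Bool, ∀ i j, (B - 1) i j ≠ 0 → c i ≠ c j := by
    simp only [hsupp, and_imp]
  have hentry : ∀ i j : Fin n, i < j → B i j = (B - 1) i j := fun i j hij =>
    (sub_one_apply_of_lt hij).symm
  rw [hcol]
  generalize hN : B - 1 = N at hN0 hNu hentry ⊢
  obtain rfl : B = 1 + N := by rw [← hN, add_sub_cancel]
  refine ⟨⟨fun ⟨⟨c, hc⟩, c', hc'⟩ => sq_eq_zero_of_coloring_of_coloring_inv_one_add hN0 hNu hc hc',
    fun hsq => ?_⟩, fun hsq => ?_, fun ⟨heq, c, hc⟩ => ?_⟩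
  · obtain ⟨c, hc⟩ := exists_coloring_of_sq_eq_zero hN0 hsq
    refine ⟨⟨c, hc⟩, c, fun i j hij h => hc i j ?_⟩
    rwa [← abs_inv_one_add_apply_of_sq_eq_zero hN0 hsq hij.ne, abs_ne_zero]
  · refine ⟨fun i j hij => ?_, exists_coloring_of_sq_eq_zero hN0 hsq⟩
    rw [hentry i j hij, abs_inv_one_add_apply_of_sq_eq_zero hN0 hsq hij.ne]
  · exact sq_eq_zero_of_apply_eq_abs_inv_one_add_apply hN0 hNu hc
      fun i j hij => (hentry i j hij).symm.trans (heq i j hij)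

/-- The following are equivalent: (i) `D` and `D⁺` are both bipartite;
(ii) `(B - I)² = 0` (no directed path of length greater than one);
(iii) `B i j = |(B⁻¹) i j|` for all `i < j` (`D = D⁺`) and `D` is bipartite. -/
theorem stmt9 {n : ℕ} (hn : 1 ≤ n) (B : Matrix (Fin n) (Fin n) ℤ)
    (h1 : ∀ i, B i i = 1) (h2 : ∀ i j : Fin n, j < i → B i j = 0)
    (h3 : ∀ i j : Fin n, i < j → 0 ≤ B i j) :
    (((∃ c : Fin n → Bool, ∀ i j : Fin n, i < j → 1 ≤ B i j → c i ≠ c j) ∧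
        (∃ c : Fin n → Bool, ∀ i j : Fin n, i < j → B⁻¹ i j ≠ 0 → c i ≠ c j)) ↔
      (B - 1) ^ 2 = 0) ∧
    ((B - 1) ^ 2 = 0 ↔
      ((∀ i j : Fin n, i < j → B i j = |B⁻¹ i j|) ∧
        ∃ c : Fin n → Bool, ∀ i j : Fin n, i < j → 1 ≤ B i j → c i ≠ c j)) :=
  stmt9_general B h1 h2 h3
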